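/- Let (K, Σ, ν) be a measure space and let f and g be real-valued integrable functions on K. Then lim_{t→0⁺} (‖f + t·g‖₁ − ‖f‖₁)/t = ∫_{{x : f(x)=0}} |g(x)| dν(x) + ∫_K sgn(f(x))·g(x) dν(x), where ‖h‖₁ = ∫_K |h| dν and sgn denotes the sign function taking values −1, 0, 1. -/

import Mathlib

open MeasureTheory

lemma real_sign_measurable : Measurable Real.sign := by
  unfold Real.sign
  exact Measurable.ite (measurableSet_lt measurable_id measurable_const)
    measurable_const
    (Measurable.ite (measurableSet_lt measurable_const measurable_id)
      measurable_const measurable_const)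

lemma abs_real_sign_le (r : ℝ) : |Real.sign r| ≤ 1 := by
  unfold Real.sign; split_ifs <;> norm_num

lemma key_tendsto (a b : ℝ) :
    Filter.Tendsto (fun t : ℝ => (|a + t * b| - |a|) / t)
      (nhdsWithin 0 (Set.Ioi 0))
      (nhds (if a = 0 then |b| else Real.sign a * b)) := by
  by_cases ha : a = 0
  · simp only [ha, if_pos, zero_add, abs_zero, sub_zero]
    apply Filter.Tendsto.congr' (f₁ := fun _ => |b|)
    · filter_upwards [self_mem_nhdsWithin] with t (ht : 0 < t)
      rw [abs_mul, abs_of_pos ht, mul_comm, mul_div_assoc, div_self ht.ne', mul_one]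
    · exact tendsto_const_nhds
  · rw [if_neg ha]
    have hcont : Filter.Tendsto (fun t : ℝ => a + t * b) (nhds 0) (nhds a) := by
      have h0 : Filter.Tendsto (fun t : ℝ => a + t * b) (nhds 0) (nhds (a + 0 * b)) :=
        (continuous_const.add (continuous_id.mul continuous_const)).tendsto (0:ℝ)
      simpa using h0
    rcases lt_or_gt_of_ne ha with hlt | hgt
    · have hev : ∀ᶠ t in nhdsWithin (0:ℝ) (Set.Ioi 0), a + t * b < 0 :=
        (hcont.mono_left nhdsWithin_le_nhds).eventually (eventually_lt_nhds hlt)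
      apply Filter.Tendsto.congr' (f₁ := fun _ => Real.sign a * b)
      · filter_upwards [self_mem_nhdsWithin, hev] with t (ht : 0 < t) h2
        rw [abs_of_neg h2, abs_of_neg hlt, Real.sign_of_neg hlt]
        field_simp
        ring
      · exact tendsto_const_nhds
    · have hev : ∀ᶠ t in nhdsWithin (0:ℝ) (Set.Ioi 0), 0 < a + t * b :=
        (hcont.mono_left nhdsWithin_le_nhds).eventually (eventually_gt_nhds hgt)
      apply Filter.Tendsto.congr' (f₁ := fun _ => Real.sign a * b)
      · filter_upwards [self_mem_nhdsWithin, hev] with t (ht : 0 < t) h2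
        rw [abs_of_pos h2, abs_of_pos hgt, Real.sign_of_pos hgt]
        field_simp
        ring
      · exact tendsto_const_nhds

/-- For integrable real functions `f, g` on a measure space
`(K, Σ, ν)`, the one-sided derivative of the `L¹`-norm is
`lim_{t→0⁺} (‖f + t·g‖₁ − ‖f‖₁)/t = ∫_{{f = 0}} |g| dν + ∫_K sgn(f)·g dν`. -/
theorem stmt_12 {K : Type*} [MeasurableSpace K] (ν : Measure K)
    (f g : K → ℝ) (hf : Integrable f ν) (hg : Integrable g ν) :
    Filter.Tendsto
      (fun t : ℝ => ((∫ x, |f x + t * g x| ∂ν) - ∫ x, |f x| ∂ν) / t)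
      (nhdsWithin 0 (Set.Ioi 0))
      (nhds ((∫ x in {x | f x = 0}, |g x| ∂ν) +
        ∫ x, Real.sign (f x) * g x ∂ν)) := by
  set f' := hf.1.mk f with hf'def
  have hae : f =ᵐ[ν] f' := hf.1.ae_eq_mk
  have hsm : StronglyMeasurable f' := hf.1.stronglyMeasurable_mk
  have hs : MeasurableSet {x | f' x = 0} := hsm.measurable (measurableSet_singleton 0)
  set L : K → ℝ := fun x =>
    Set.indicator {x | f' x = 0} (fun x => |g x|) x + Real.sign (f' x) * g x with hL
  -- Step 1: rewrite the function
  have hfun : (fun t : ℝ => ((∫ x, |f x + t * g x| ∂ν) - ∫ x, |f x| ∂ν) / t)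
      = fun t : ℝ => ∫ x, (|f x + t * g x| - |f x|) / t ∂ν := by
    funext t
    have h1 : Integrable (fun x => |f x + t * g x|) ν := (hf.add (hg.const_mul t)).abs
    have h2 : Integrable (fun x => |f x|) ν := hf.abs
    rw [integral_div, integral_sub h1 h2]
  rw [hfun]
  -- integrabilities
  have hmeas_sg : AEStronglyMeasurable (fun x => Real.sign (f' x) * g x) ν :=
    ((real_sign_measurable.comp hsm.measurable).aestronglyMeasurable).mul hg.1
  have hsign_int : Integrable (fun x => Real.sign (f' x) * g x) ν := by
    apply Integrable.mono hg.abs hmeas_sg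
    filter_upwards with x
    rw [Real.norm_eq_abs, Real.norm_eq_abs, abs_mul, abs_abs]
    calc |Real.sign (f' x)| * |g x| ≤ 1 * |g x| :=
          mul_le_mul_of_nonneg_right (abs_real_sign_le _) (abs_nonneg _)
      _ = |g x| := one_mul _
  have hind_int : Integrable (fun x => Set.indicator {x | f' x = 0} (fun x => |g x|) x) ν :=
    hg.abs.indicator hs
  -- Step 2: compute the target value
  have htarget : ∫ x, L x ∂ν =
      (∫ x in {x | f x = 0}, |g x| ∂ν) + ∫ x, Real.sign (f x) * g x ∂ν := by
    rw [hL, integral_add hind_int hsign_int, integral_indicator hs]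
    congr 1
    · apply setIntegral_congr_set
      rw [Filter.eventuallyEq_set]
      filter_upwards [hae] with x hx
      simp [Set.mem_setOf_eq, hx]
    · apply integral_congr_ae
      filter_upwards [hae] with x hx
      rw [hx]
  rw [← htarget]
  -- Step 3: dominated convergence
  apply tendsto_integral_filter_of_dominated_convergence (fun x => |g x|)
  · filter_upwards with t
    exact (((measurable_abs.comp_aemeasurable
        (hf.1.aemeasurable.add (hg.1.aemeasurable.const_mul t))).sub
      (measurable_abs.comp_aemeasurable hf.1.aemeasurable)).div_const t).aestronglyMeasurable
  · filter_upwards [self_mem_nhdsWithin] with t (ht : 0 < t)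
    filter_upwards with x
    rw [Real.norm_eq_abs, abs_div, abs_of_pos ht, div_le_iff₀ ht]
    calc |(|f x + t * g x| - |f x|)| ≤ |t * g x| :=
          (abs_abs_sub_abs_le_abs_sub _ _).trans_eq (by rw [add_sub_cancel_left])
      _ = |g x| * t := by rw [abs_mul, abs_of_pos ht, mul_comm]
  · exact hg.abs
  · filter_upwards [hae] with x hx
    have h := key_tendsto (f x) (g x)
    convert h using 2
    show Set.indicator {x | f' x = 0} (fun x => |g x|) x + Real.sign (f' x) * g x
      = if f x = 0 then |g x| else Real.sign (f x) * g x
    by_cases h0 : f x = 0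
    · have h0' : f' x = 0 := hx ▸ h0
      have hmem : x ∈ {x | f' x = 0} := h0'
      rw [if_pos h0, Set.indicator_of_mem hmem, h0',
        Real.sign_zero, zero_mul, add_zero]
    · have h0' : f' x ≠ 0 := hx ▸ h0
      have hmem : x ∉ {x | f' x = 0} := h0'
      rw [if_neg h0, Set.indicator_of_notMem hmem, zero_add, hx]
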